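/- For every partial Boolean function f : Dom(f) → {0,1} with Dom(f) ⊆ {0,1}^n, randomized sabotage complexity upper bounds randomized certificate complexity up to a factor 4: RS(f) ≥ RC(f)/4. -/

import Mathlib

/-! ### Decision trees -/

/-- A deterministic decision tree querying positions of type `ι`, receiving answers
in `α`, and producing an output in `β`. -/
inductive DTree (ι α β : Type) : Type
  | leaf (b : β) : DTree ι α β
  | node (i : ι) (next : α → DTree ι α β) : DTree ι α β

namespace DTree

variable {ι α β : Type}

/-- The output of a decision tree on input `x`. -/
def output : DTree ι α β → (ι → α) → β
  | leaf b, _ => b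
  | node i next, x => (next (x i)).output x

/-- The number of queries made by a decision tree on input `x`. -/
def cost : DTree ι α β → (ι → α) → ℕ
  | leaf _, _ => 0
  | node i next, x => (next (x i)).cost x + 1

/-- The set of positions queried by a decision tree on input `x`. -/
def queries : DTree ι α β → (ι → α) → Set ι
  | leaf _, _ => ∅
  | node i next, x => insert i ((next (x i)).queries x)

end DTree

/-- A partial function on inputs `ι → α` with outputs in `β`; `none` means undefined
(the domain is the set of inputs mapped to `some` value). -/
abbrev PFn (ι α β : Type) := (ι → α) → Option β

/-- `t` computes the partial function `f` (correct on every input of the domain). -/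
def DTree.computesP {ι α β : Type} (t : DTree ι α β) (f : PFn ι α β) : Prop :=
  ∀ x b, f x = some b → t.output x = b

/-- Deterministic query complexity `D(f)`. -/
noncomputable def Dq {ι α β : Type} (f : PFn ι α β) : ℝ :=
  sInf {T : ℝ | 0 ≤ T ∧ ∃ t : DTree ι α β, t.computesP f ∧ ∀ x, (t.cost x : ℝ) ≤ T}

/-! ### Randomized query algorithms -/

/-- A randomized query algorithm: a finitely supported probability distribution over
deterministic decision trees. -/
structure RandAlg (ι α β : Type) where
  Ω : Type
  [fin : Fintype Ω]
  p : Ω → ℝ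
  nonneg : ∀ ω, 0 ≤ p ω
  sum_one : ∑ ω, p ω = 1
  tree : Ω → DTree ι α β

namespace RandAlg

variable {ι α β : Type}

/-- Expected number of queries of `A` on input `x`. -/
noncomputable def expCost (A : RandAlg ι α β) (x : ι → α) : ℝ :=
  letI := A.fin
  ∑ ω, A.p ω * ((A.tree ω).cost x : ℝ)

open Classical in
/-- Probability that `A` outputs `b` on input `x`. -/
noncomputable def succProb (A : RandAlg ι α β) (x : ι → α) (b : β) : ℝ :=
  letI := A.fin
  ∑ ω, if (A.tree ω).output x = b then A.p ω else 0

/-- `A` computes `f` with error at most `ε`: on every input of the domain the correct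
output is produced with probability at least `1 - ε`. -/
def Computes (A : RandAlg ι α β) (f : PFn ι α β) (ε : ℝ) : Prop :=
  ∀ x b, f x = some b → 1 - ε ≤ A.succProb x b

/-- The worst-case cost of `A` (over all inputs and all trees in the support) is at most `T`. -/
def WCostLe (A : RandAlg ι α β) (T : ℝ) : Prop :=
  ∀ ω, A.p ω ≠ 0 → ∀ x, ((A.tree ω).cost x : ℝ) ≤ T

/-- The expected cost of `A` on every input of the domain of `f` is at most `T`. -/
def ECostLe (A : RandAlg ι α β) (f : PFn ι α β) (T : ℝ) : Prop :=
  ∀ x, (f x).isSome → A.expCost x ≤ T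

end RandAlg

/-- `R_ε(f)`: minimum worst-case cost of an `ε`-error randomized algorithm for `f`. -/
noncomputable def Rw {ι α β : Type} (ε : ℝ) (f : PFn ι α β) : ℝ :=
  sInf {T : ℝ | 0 ≤ T ∧ ∃ A : RandAlg ι α β, A.Computes f ε ∧ A.WCostLe T}

/-- `R̄_ε(f)`: minimum expected cost of an `ε`-error randomized algorithm for `f`. -/
noncomputable def Rbar {ι α β : Type} (ε : ℝ) (f : PFn ι α β) : ℝ :=
  sInf {T : ℝ | 0 ≤ T ∧ ∃ A : RandAlg ι α β, A.Computes f ε ∧ A.ECostLe f T}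

/-- `R₀(f)`: zero-error expected randomized query complexity. -/
noncomputable def R0 {ι α β : Type} (f : PFn ι α β) : ℝ := Rbar 0 f

/-- `R(f) := R_{1/3}(f)`: bounded-error randomized query complexity. -/
noncomputable def Rb {ι α β : Type} (f : PFn ι α β) : ℝ := Rw (1/3) f

/-- The total function `f` viewed as a partial function. -/
def tot {ι α β : Type} (f : (ι → α) → β) : PFn ι α β := fun x => some (f x)


/-! ### Sabotage complexity and composition -/

/-- The four-letter alphabet `{0, 1, *, †}` of sabotaged inputs. -/
inductive Sab : Type
  | zero : Sab
  | one : Sab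
  | star : Sab
  | dagger : Sab
deriving DecidableEq

/-- Embedding of Boolean values into the sabotage alphabet. -/
def Sab.ofBool : Bool → Sab
  | false => Sab.zero
  | true => Sab.one

/-- `p` is consistent with the Boolean input `x`: wherever `p` has a Boolean entry,
it agrees with `x`. -/
def SabConsistent {ι : Type} (p : ι → Sab) (x : ι → Bool) : Prop :=
  ∀ i, p i = Sab.ofBool (x i) ∨ p i = Sab.star ∨ p i = Sab.dagger

/-- `p` is a sabotaged input for `f` using the sabotage symbol `s`: all entries of `p`
lie in `{0, 1, s}` and `p` is consistent with both a `0`-input and a `1`-input of `f`. -/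
def IsSabotaged {ι : Type} (f : PFn ι Bool Bool) (s : Sab) (p : ι → Sab) : Prop :=
  (∀ i, p i = Sab.zero ∨ p i = Sab.one ∨ p i = s) ∧
  ∃ x y, (f x).isSome ∧ (f y).isSome ∧ f x ≠ f y ∧ SabConsistent p x ∧ SabConsistent p y

open Classical in
/-- The sabotage problem `f_sab` associated with `f`: it is `0` on `P_f` (inputs
sabotaged with `*`) and `1` on `P_f†` (inputs sabotaged with `†`). -/
noncomputable def fsab {ι : Type} (f : PFn ι Bool Bool) : PFn ι Sab Bool :=
  fun p =>
    if IsSabotaged f Sab.star p then some false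
    else if IsSabotaged f Sab.dagger p then some true
    else none

open Classical in
/-- `f_usab`: the restriction of `f_sab` to inputs having exactly one `*` or `†` entry. -/
noncomputable def fusab {ι : Type} (f : PFn ι Bool Bool) : PFn ι Sab Bool :=
  fun p =>
    if ∃! i, p i = Sab.star ∨ p i = Sab.dagger then fsab f p else none

/-- Randomized sabotage complexity `RS(f) := R₀(f_sab)`. -/
noncomputable def RS {ι : Type} (f : PFn ι Bool Bool) : ℝ := R0 (fsab f)

/-- `RS_u(f) := R₀(f_usab)` (this is `0` automatically when `f_usab` has empty domain). -/
noncomputable def RSu {ι : Type} (f : PFn ι Bool Bool) : ℝ := R0 (fusab f)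

open Classical in
/-- Composition `f ∘ g` of partial functions: defined on an input exactly when every
inner copy of `g` is defined and the tuple of inner values lies in the domain of `f`. -/
noncomputable def pcomp {κ ι α β γ : Type} (f : PFn κ β γ) (g : PFn ι α β) :
    PFn (κ × ι) α γ :=
  fun x =>
    if h : ∀ i : κ, (g fun j => x (i, j)).isSome then
      f fun i => (g fun j => x (i, j)).get (h i)
    else none

/-- Index types for iterated self-composition. -/
def IterIdx (κ : Type) : ℕ → Type
  | 0 => κ
  | n + 1 => κ × IterIdx κ n

/-- `iterComp f n` is `f` composed with itself `n + 1` times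
(`iterComp f 0 = f`, `iterComp f (n+1) = f ∘ iterComp f n`). -/
noncomputable def iterComp {κ : Type} (f : PFn κ Bool Bool) : (n : ℕ) → PFn (IterIdx κ n) Bool Bool
  | 0 => f
  | n + 1 => pcomp f (iterComp f n)

/-! ### The index function -/

/-- The value of a bit-string read as a binary number (bit `i` has weight `2^i`). -/
def binval {b : ℕ} (x : Fin b → Bool) : ℕ := ∑ i, if x i then 2 ^ (i : ℕ) else 0

theorem sum_range_two_pow (b : ℕ) : ∑ i ∈ Finset.range b, 2 ^ i = 2 ^ b - 1 := by
  induction b with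
  | zero => simp
  | succ n ih =>
    rw [Finset.sum_range_succ, ih, pow_succ]
    have : 1 ≤ 2 ^ n := Nat.one_le_two_pow
    omega

theorem binval_lt {b : ℕ} (x : Fin b → Bool) : binval x < 2 ^ b := by
  have h1 : binval x ≤ ∑ i : Fin b, 2 ^ (i : ℕ) := by
    refine Finset.sum_le_sum fun i _ => ?_
    split <;> simp
  have h2 : ∑ i : Fin b, 2 ^ (i : ℕ) = 2 ^ b - 1 := by
    rw [Fin.sum_univ_eq_sum_range (fun i => 2 ^ i) b]
    exact sum_range_two_pow b
  have h3 : 0 < 2 ^ b := Nat.pow_pos (by norm_num)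
  omega

/-- The largest `c` with `c + 2^c ≤ m`. -/
def indexC (m : ℕ) : ℕ := Nat.findGreatest (fun c => c + 2 ^ c ≤ m) m

/-- The index function `Ind_m : {0,1}^m → {0,1}`: the first `c` bits (where `c` is the
largest integer with `c + 2^c ≤ m`) are read as a binary address `y` into the next
`2^c` bits, and the output is the addressed bit. -/
def IndFn (m : ℕ) : PFn (Fin m) Bool Bool :=
  fun x =>
    let c := indexC m
    let y := ∑ i : Fin m, if (i : ℕ) < c ∧ x i = true then 2 ^ (i : ℕ) else 0
    if h : c + y < m then some (x ⟨c + y, h⟩) else none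

/-- `f^{⊕c}_ind`: the index function on `c + 2^c` bits with `f` composed into each of
the `c` address bits only. -/
def findex {n : ℕ} (f : PFn (Fin n) Bool Bool) (c : ℕ) :
    PFn ((Fin c × Fin n) ⊕ Fin (2 ^ c)) Bool Bool :=
  fun x =>
    if h : ∀ i : Fin c, (f fun j => x (Sum.inl (i, j))).isSome then
      some (x (Sum.inr ⟨binval fun i => (f fun j => x (Sum.inl (i, j))).get (h i),
        binval_lt _⟩))
    else none

/-! ### Randomized certificate complexity (fractional block sensitivity) -/

/-- `x` with the bits indexed by the block `B` flipped. -/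
def flipB {n : ℕ} (x : Fin n → Bool) (B : Finset (Fin n)) : Fin n → Bool :=
  fun i => if i ∈ B then !(x i) else x i

/-- `B` is a sensitive block for `x` with respect to `f`. -/
def SensBlock {n : ℕ} (f : PFn (Fin n) Bool Bool) (x : Fin n → Bool)
    (B : Finset (Fin n)) : Prop :=
  (f x).isSome ∧ (f (flipB x B)).isSome ∧ f (flipB x B) ≠ f x

/-- `RC_x(f)`: the maximum total weight of a fractionally disjoint set of sensitive
blocks of `x`, i.e. of nonnegative weights on the sensitive blocks such that every
coordinate is covered with total weight at most `1`. -/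
noncomputable def RCx {n : ℕ} (f : PFn (Fin n) Bool Bool) (x : Fin n → Bool) : ℝ :=
  sSup {W : ℝ | ∃ w : Finset (Fin n) → ℝ,
    (∀ B, 0 ≤ w B) ∧ (∀ B, w B ≠ 0 → SensBlock f x B) ∧
    (∀ i : Fin n, ∑ B : Finset (Fin n), (if i ∈ B then w B else 0) ≤ 1) ∧
    W = ∑ B : Finset (Fin n), w B}

/-- `RC(f)`: randomized certificate complexity of `f`. -/
noncomputable def RC {n : ℕ} (f : PFn (Fin n) Bool Bool) : ℝ :=
  sSup {W : ℝ | ∃ x, (f x).isSome ∧ W = RCx f x}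
/-!
Fix `x` in the domain of `f` and a fractional packing `w` of sensitive blocks of `x`, of total
weight `W`. For a sensitive block `B`, overwriting `B` in `x` by `*` resp. `†` gives inputs of
`f_sab` with different values, so every tree in the support of a zero-error algorithm separates
them. Along the path of `x`, a query at position `i` can only tell apart the blocks containing
`i`, whose weight is at most `1`; hence a tree's `w`-weighted cost on the `*`-inputs is at least
`W + (W - 1) + (W - 2) + ⋯ ≥ W² / 4`. Averaging over the algorithm, `W² / 4 ≤ W · T` when the
expected cost is at most `T`, that is `W ≤ 4 T`.
-/

namespace DTree

variable {ι α β : Type}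

def queryAll [DecidableEq ι] (h : (ι → α) → β) : List ι → (ι → α) → DTree ι α β
  | [], g => leaf (h g)
  | i :: l, g => node i fun a => queryAll h l (Function.update g i a)

theorem output_queryAll [DecidableEq ι] (h : (ι → α) → β) :
    ∀ (l : List ι) (g x : ι → α),
      (queryAll h l g).output x = h fun j => if j ∈ l then x j else g j
  | [], g, x => by simp [queryAll, output]
  | i :: l, g, x => by
    simp only [queryAll, output, output_queryAll h l]
    congr 1
    funext j
    by_cases hji : j = i
    · subst hji; simp
    · simp [hji]

theorem cost_queryAll [DecidableEq ι] (h : (ι → α) → β) :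
    ∀ (l : List ι) (g x : ι → α), (queryAll h l g).cost x = l.length
  | [], _, _ => rfl
  | i :: l, g, x => by simp [queryAll, cost, cost_queryAll h l]

theorem exists_computesP_cost_eq_card [Fintype ι] [Nonempty α] [Nonempty β] (f : PFn ι α β) :
    ∃ t : DTree ι α β, t.computesP f ∧ ∀ x, t.cost x = Fintype.card ι := by
  classical
  refine ⟨queryAll (fun x => (f x).getD (Classical.arbitrary β)) Finset.univ.toList
    (fun _ => Classical.arbitrary α), fun x b hx => ?_, fun x => ?_⟩
  · simp [output_queryAll, hx]
  · simp [cost_queryAll]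

end DTree

namespace RandAlg

variable {ι α β : Type}

def ofTree (t : DTree ι α β) : RandAlg ι α β where
  Ω := Unit
  p _ := 1
  nonneg _ := zero_le_one
  sum_one := by simp
  tree _ := t

theorem computes_ofTree {t : DTree ι α β} {f : PFn ι α β} (ht : t.computesP f) :
    (ofTree t).Computes f 0 := by
  intro x b hx
  simpa [ofTree, succProb, ht x b hx] using ⟨(), Finset.mem_univ _⟩

theorem expCost_ofTree (t : DTree ι α β) (x : ι → α) : (ofTree t).expCost x = t.cost x := by
  simp only [ofTree, expCost, one_mul]
  exact Fintype.sum_unique _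

theorem output_eq_of_computes_zero {A : RandAlg ι α β} {f : PFn ι α β} (hA : A.Computes f 0)
    {ω : A.Ω} (hω : A.p ω ≠ 0) {x : ι → α} {b : β} (hx : f x = some b) :
    (A.tree ω).output x = b := by
  classical
  let := A.fin
  by_contra hne
  -- the tree `ω` errs on `x`, so the success probability misses its positive mass `A.p ω`
  have hle : A.succProb x b ≤ ∑ ω', A.p ω' - A.p ω := by
    rw [← Finset.sum_erase_add _ _ (Finset.mem_univ ω), succProb,
      ← Finset.sum_erase_add _ _ (Finset.mem_univ ω), if_neg hne, add_zero, add_sub_cancel_right]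
    exact Finset.sum_le_sum fun ω' _ => by split_ifs <;> simp [A.nonneg ω']
  have := hA x b hx
  rw [A.sum_one] at hle
  exact hω (le_antisymm (by linarith) (A.nonneg ω))

theorem le_sum_mul_expCost (A : RandAlg ι α β) {κ : Type} [Fintype κ] (w : κ → ℝ)
    (y : κ → ι → α) {a : ℝ} (h : ∀ ω, A.p ω ≠ 0 → a ≤ ∑ k, w k * (A.tree ω).cost (y k)) :
    a ≤ ∑ k, w k * A.expCost (y k) := by
  let := A.fin
  calc a = ∑ ω, A.p ω * a := by rw [← Finset.sum_mul, A.sum_one, one_mul]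
    _ ≤ ∑ ω, A.p ω * ∑ k, w k * (A.tree ω).cost (y k) := by
      refine Finset.sum_le_sum fun ω _ => ?_
      by_cases hω : A.p ω = 0
      · simp [hω]
      · exact mul_le_mul_of_nonneg_left (h ω hω) (A.nonneg ω)
    _ = ∑ k, w k * A.expCost (y k) := by
      simp only [expCost, Finset.mul_sum]
      rw [Finset.sum_comm]
      refine Finset.sum_congr rfl fun k _ => Finset.sum_congr rfl fun ω _ => by ring

end RandAlg

theorem R0_nonneg {ι α β : Type} (f : PFn ι α β) : 0 ≤ R0 f :=
  Real.sInf_nonneg fun _ hT => hT.1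

theorem le_R0 {ι α β : Type} [Fintype ι] [Nonempty α] [Nonempty β] {f : PFn ι α β} {c : ℝ}
    (h : ∀ T, 0 ≤ T → ∀ A : RandAlg ι α β, A.Computes f 0 → A.ECostLe f T → c ≤ T) :
    c ≤ R0 f := by
  obtain ⟨t, ht, hcost⟩ := DTree.exists_computesP_cost_eq_card f
  refine le_csInf ⟨Fintype.card ι, Nat.cast_nonneg _, RandAlg.ofTree t,
    RandAlg.computes_ofTree ht, fun x _ => ?_⟩ fun T ⟨hT, A, hA, hc⟩ => h T hT A hA hc
  rw [RandAlg.expCost_ofTree, hcost]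

instance : Nonempty Sab := ⟨.zero⟩

section Sabotage

variable {ι : Type} [DecidableEq ι]

def sabotage (s : Sab) (x : ι → Bool) (B : Finset ι) : ι → Sab :=
  fun i => if i ∈ B then s else Sab.ofBool (x i)

theorem sabotage_of_notMem {s : Sab} {x : ι → Bool} {B : Finset ι} {i : ι} (hi : i ∉ B) :
    sabotage s x B i = Sab.ofBool (x i) :=
  if_neg hi

theorem SensBlock.nonempty {n : ℕ} {f : PFn (Fin n) Bool Bool} {x : Fin n → Bool}
    {B : Finset (Fin n)} (hB : SensBlock f x B) : B.Nonempty := by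
  rw [Finset.nonempty_iff_ne_empty]
  rintro rfl
  exact hB.2.2 (congrArg f (funext fun i => if_neg (Finset.notMem_empty i)))

theorem isSabotaged_sabotage {n : ℕ} {f : PFn (Fin n) Bool Bool} {x : Fin n → Bool}
    {B : Finset (Fin n)} (hB : SensBlock f x B) {s : Sab} (hs : s = .star ∨ s = .dagger) :
    IsSabotaged f s (sabotage s x B) := by
  obtain ⟨hx, hxB, hne⟩ := hB
  refine ⟨fun i => ?_, x, flipB x B, hx, hxB, hne.symm, fun i => ?_, fun i => ?_⟩ <;>
    by_cases hi : i ∈ B <;> simp only [sabotage, flipB, hi, if_true, if_false, true_or, or_true]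
  · cases x i <;> simp [Sab.ofBool]
  all_goals rcases hs with rfl | rfl <;> simp

theorem fsab_sabotage_star {n : ℕ} {f : PFn (Fin n) Bool Bool} {x : Fin n → Bool}
    {B : Finset (Fin n)} (hB : SensBlock f x B) : fsab f (sabotage .star x B) = some false := by
  simp [fsab, isSabotaged_sabotage hB (.inl rfl)]

theorem fsab_sabotage_dagger {n : ℕ} {f : PFn (Fin n) Bool Bool} {x : Fin n → Bool}
    {B : Finset (Fin n)} (hB : SensBlock f x B) : fsab f (sabotage .dagger x B) = some true := by
  obtain ⟨i, hi⟩ := hB.nonempty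
  have hstar : ¬IsSabotaged f .star (sabotage .dagger x B) := fun h => by
    simpa [sabotage, hi] using h.1 i
  simp [fsab, hstar, isSabotaged_sabotage hB (.inr rfl)]

end Sabotage

theorem DTree.sq_sum_div_four_le_sum_mul_cost {ι α β : Type} [Fintype ι] [DecidableEq ι]
    (t : DTree ι α β) (u : ι → α) (y z : Finset ι → ι → α)
    (hy : ∀ B, ∀ i ∉ B, y B i = u i) (hz : ∀ B, ∀ i ∉ B, z B i = u i)
    (w : Finset ι → ℝ) (hw : ∀ B, 0 ≤ w B)
    (hsep : ∀ B, w B ≠ 0 → t.output (y B) ≠ t.output (z B))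
    (hpack : ∀ i, ∑ B, (if i ∈ B then w B else 0) ≤ 1) :
    (∑ B, w B) ^ 2 / 4 ≤ ∑ B, w B * t.cost (y B) := by
  induction t generalizing w with
  | leaf b =>
    have hw0 : ∀ B, w B = 0 := fun B => not_not.1 fun hB => hsep B hB rfl
    simp [hw0]
  | node i next ih =>
    set W := ∑ B, w B
    set Wi := ∑ B, if i ∈ B then w B else 0
    -- both inputs of a block avoiding `i` agree with `u` at `i`, so they follow `next (u i)`
    let w' : Finset ι → ℝ := fun B => if i ∈ B then 0 else w B
    have hw' : ∀ B, 0 ≤ w' B := fun B => by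
      by_cases hi : i ∈ B <;> simp [w', hi, hw B]
    have hsep' : ∀ B, w' B ≠ 0 → (next (u i)).output (y B) ≠ (next (u i)).output (z B) := by
      intro B hB
      have hi : i ∉ B := fun hi => hB (if_pos hi)
      simpa [output, hy B i hi, hz B i hi] using hsep B (by simpa [w', hi] using hB)
    have hpack' : ∀ j, ∑ B, (if j ∈ B then w' B else 0) ≤ 1 := fun j =>
      (Finset.sum_le_sum fun B _ => by
        by_cases hj : j ∈ B <;> by_cases hi : i ∈ B <;> simp [w', hi, hj, hw B]).trans (hpack j)
    have hW' : ∑ B, w' B = W - Wi := by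
      rw [← Finset.sum_sub_distrib]
      exact Finset.sum_congr rfl fun B _ => by by_cases hi : i ∈ B <;> simp [w', hi]
    have hcost :
        ∑ B, w' B * (next (u i)).cost (y B) + W ≤ ∑ B, w B * (node i next).cost (y B) := by
      rw [← Finset.sum_add_distrib]
      refine Finset.sum_le_sum fun B _ => ?_
      by_cases hi : i ∈ B
      · simp only [w', hi, if_true, zero_mul, zero_add, cost, Nat.cast_succ]
        nlinarith [hw B, (Nat.cast_nonneg _ : (0 : ℝ) ≤ (next (y B i)).cost (y B))]
      · simp [w', hi, cost, hy B i hi, mul_add]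
    have hWi0 : 0 ≤ Wi := Finset.sum_nonneg fun B _ => by split_ifs <;> simp [hw B]
    have hWiW : Wi ≤ W := Finset.sum_le_sum fun B _ => by split_ifs <;> simp [hw B]
    have hIH := ih (u i) w' hw' hsep' hpack'
    rw [hW'] at hIH
    nlinarith [mul_le_mul_of_nonneg_right (hpack i) (by linarith : 0 ≤ 2 * W - Wi)]

theorem sum_div_four_le_of_computes_fsab {n : ℕ} {f : PFn (Fin n) Bool Bool} {x : Fin n → Bool}
    {w : Finset (Fin n) → ℝ} (hw : ∀ B, 0 ≤ w B) (hsens : ∀ B, w B ≠ 0 → SensBlock f x B)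
    (hpack : ∀ i, ∑ B, (if i ∈ B then w B else 0) ≤ 1) {A : RandAlg (Fin n) Sab Bool} {T : ℝ}
    (hT : 0 ≤ T) (hA : A.Computes (fsab f) 0) (hcost : A.ECostLe (fsab f) T) :
    (∑ B, w B) / 4 ≤ T := by
  set W := ∑ B, w B
  have htree (ω : A.Ω) (hω : A.p ω ≠ 0) :
      W ^ 2 / 4 ≤ ∑ B, w B * (A.tree ω).cost (sabotage .star x B) := by
    refine (A.tree ω).sq_sum_div_four_le_sum_mul_cost (Sab.ofBool ∘ x) _ (sabotage .dagger x)
      (fun B i hi => sabotage_of_notMem hi) (fun B i hi => sabotage_of_notMem hi) w hw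
      (fun B hB => ?_) hpack
    rw [RandAlg.output_eq_of_computes_zero hA hω (fsab_sabotage_star (hsens B hB)),
      RandAlg.output_eq_of_computes_zero hA hω (fsab_sabotage_dagger (hsens B hB))]
    decide
  have hexp : ∑ B, w B * A.expCost (sabotage .star x B) ≤ W * T := by
    rw [Finset.sum_mul]
    refine Finset.sum_le_sum fun B _ => ?_
    by_cases hB : w B = 0
    · simp [hB]
    · exact mul_le_mul_of_nonneg_left
        (hcost _ (by rw [fsab_sabotage_star (hsens B hB)]; rfl)) (hw B)
  have hW : 0 ≤ W := Finset.sum_nonneg fun B _ => hw B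
  nlinarith [(A.le_sum_mul_expCost w _ htree).trans hexp]

/-- **Randomized sabotage complexity dominates randomized certificate complexity:**
`RS(f) ≥ RC(f)/4` for every partial Boolean function `f`. -/
theorem RS_ge_RC_div_four {n : ℕ} (f : PFn (Fin n) Bool Bool) :
    RC f / 4 ≤ RS f := by
  have hRS : 0 ≤ 4 * RS f := mul_nonneg zero_le_four (R0_nonneg _)
  rw [div_le_iff₀' four_pos]
  refine Real.sSup_le ?_ hRS
  rintro _ ⟨x, -, rfl⟩
  refine Real.sSup_le ?_ hRS
  rintro _ ⟨w, hw, hsens, hpack, rfl⟩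
  exact (div_le_iff₀' four_pos).1 <| le_R0 fun T hT A hA hcost =>
    sum_div_four_le_of_computes_fsab hw hsens hpack hT hA hcost
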